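/- arXiv:1609.04142 — 3 statements merged into one kernel-verified Lean document; each statement's English description precedes it below -/
import Mathlib

section
/- Let p be an odd prime and let V = ⨁_{l=0}^{p−1} (ℤ/pℤ)·e_l be a vector space over 𝔽_p with distinguished element w = Σ_{l=0}^{p−1} e_l. For a fixed i with 1 ≤ i ≤ p−1, let W be the subspace spanned by the vectors e_{l+i} − e_l − w for 0 ≤ l ≤ p−1 (indices mod p), and let V₀ be the subspace spanned by e_l − e₀ for 1 ≤ l ≤ p−1. Then W = V₀. -/
/-- Let `p` be an odd prime, `V = ⨁_{l} (ℤ/p)·e_l` (`l ∈ Fin p`) with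
`w = ∑_l e_l`.  For fixed `i ≠ 0`, the span `W` of the vectors `e_{l+i} - e_l - w`
(`l ∈ Fin p`, indices mod `p`) equals the span `V₀` of the vectors `e_l - e₀` (`l ≠ 0`). -/
theorem span_shift_sub_w_eq_span_diff
    (p : ℕ) [NeZero p] (hp : p.Prime) (hodd : Odd p) (i : Fin p) (hi : i ≠ 0) :
    Submodule.span (ZMod p) {v : Fin p → ZMod p |
        ∃ l : Fin p, v = Pi.single (l + i) 1 - Pi.single l 1 - ∑ m : Fin p, Pi.single m 1} =
      Submodule.span (ZMod p) {v : Fin p → ZMod p |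
        ∃ l : Fin p, l ≠ 0 ∧ v = Pi.single l 1 - Pi.single 0 1} := by
  classical
  haveI := Fact.mk hp
  set f : Fin p → (Fin p → ZMod p) := fun l => Pi.single l 1 with hf
  set w : Fin p → ZMod p := ∑ m : Fin p, Pi.single m 1 with hw
  set W : Submodule (ZMod p) (Fin p → ZMod p) :=
    Submodule.span (ZMod p) {v | ∃ l : Fin p, v = f (l + i) - f l - w} with hW
  set V₀ : Submodule (ZMod p) (Fin p → ZMod p) :=
    Submodule.span (ZMod p) {v | ∃ l : Fin p, l ≠ 0 ∧ v = f l - f 0} with hV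
  show W = V₀
  -- `p • x = 0` in characteristic `p`
  have hpsmul : ∀ x : Fin p → ZMod p, p • x = 0 := by
    intro x
    rw [← Nat.cast_smul_eq_nsmul (ZMod p), ZMod.natCast_self, zero_smul]
  -- all differences `f m - f 0` are in `V₀`
  have hdiff : ∀ m : Fin p, f m - f 0 ∈ V₀ := by
    intro m
    by_cases hm : m = 0
    · simp [hm]
    · exact Submodule.subset_span ⟨m, hm, rfl⟩
  -- `w` as a sum of differences
  have hwdiff : w = ∑ m : Fin p, (f m - f 0) := by
    rw [Finset.sum_sub_distrib, Finset.sum_const, Finset.card_univ, Fintype.card_fin,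
      hpsmul, sub_zero, hw]
  -- `W ≤ V₀`
  have h1 : W ≤ V₀ := by
    rw [hW, Submodule.span_le]
    rintro v ⟨l, rfl⟩
    have : f (l + i) - f l - w = (f (l + i) - f 0) - (f l - f 0) - ∑ m : Fin p, (f m - f 0) := by
      rw [← hwdiff]; abel
    rw [this]
    exact sub_mem (sub_mem (hdiff _) (hdiff _)) (Submodule.sum_mem _ fun m _ => hdiff m)
  -- the additive order of `i` is `p`
  have hord : addOrderOf i = p := by
    have hd := addOrderOf_dvd_card (x := i)
    simp only [Fintype.card_fin] at hd
    rcases (hp.eq_one_or_self_of_dvd _ hd) with h | h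
    · exact absurd (AddMonoid.addOrderOf_eq_one_iff.mp h) hi
    · exact h
  -- generators of `W`
  have hgen : ∀ l : Fin p, f (l + i) - f l - w ∈ W := fun l =>
    Submodule.subset_span ⟨l, rfl⟩
  -- telescoping sums of generators
  have htel : ∀ k : ℕ, f (k • i) - f 0 - (k : ZMod p) • w ∈ W := by
    intro k
    induction k with
    | zero => simp
    | succ k ih =>
      have : f ((k + 1) • i) - f 0 - ((k : ℕ) + 1 : ZMod p) • w =
          (f (k • i + i) - f (k • i) - w) + (f (k • i) - f 0 - (k : ZMod p) • w) := by
        rw [succ_nsmul, add_smul, one_smul]; abel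
      rw [Nat.cast_add, Nat.cast_one, this]
      exact add_mem (hgen _) ih
  -- the map `k ↦ k • i` is a bijection of `Fin p`
  have hinj : Function.Injective (fun k : Fin p => (k : ℕ) • i) := by
    intro a b hab
    have h2 : (a : ℕ) ≡ (b : ℕ) [MOD addOrderOf i] := nsmul_eq_nsmul_iff_modEq.mp hab
    rw [hord] at h2
    exact Fin.ext (Nat.ModEq.eq_of_lt_of_lt h2 a.isLt b.isLt)
  have hbij : Function.Bijective (fun k : Fin p => (k : ℕ) • i) :=
    ⟨hinj, Finite.surjective_of_injective hinj⟩
  -- `∑_{k < p} k = 0` in `ZMod p` (here `p` odd is used)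
  have hsum0 : (∑ k : Fin p, ((k : ℕ) : ZMod p)) = 0 := by
    have h2 : (2 : ZMod p) ≠ 0 := by
      intro h
      have hdvd : (p : ℕ) ∣ 2 :=
        (ZMod.natCast_eq_zero_iff 2 p).mp (by exact_mod_cast h)
      have hp2 : p = 2 := (Nat.prime_dvd_prime_iff_eq hp Nat.prime_two).mp hdvd
      rw [hp2] at hodd
      simp [Nat.odd_iff] at hodd
    have key : (∑ k : Fin p, ((k : ℕ) : ZMod p)) * 2 = 0 := by
      have : (∑ k : Fin p, (k : ℕ)) * 2 = p * (p - 1) := by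
        rw [Fin.sum_univ_eq_sum_range (fun j => j)]
        exact Finset.sum_range_id_mul_two p
      calc (∑ k : Fin p, ((k : ℕ) : ZMod p)) * 2
          = (((∑ k : Fin p, (k : ℕ)) * 2 : ℕ) : ZMod p) := by push_cast; ring
        _ = ((p * (p - 1) : ℕ) : ZMod p) := by rw [this]
        _ = 0 := by push_cast [ZMod.natCast_self]; ring
    rcases mul_eq_zero.mp key with h | h
    · exact h
    · exact absurd h h2
  -- `w ∈ W`
  have hwW : w ∈ W := by
    have hsum : (∑ k : Fin p, (f ((k : ℕ) • i) - f 0 - ((k : ℕ) : ZMod p) • w)) ∈ W :=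
      Submodule.sum_mem _ fun k _ => htel (k : ℕ)
    have heq : (∑ k : Fin p, (f ((k : ℕ) • i) - f 0 - ((k : ℕ) : ZMod p) • w)) = w := by
      rw [show (∑ k : Fin p, (f ((k : ℕ) • i) - f 0 - ((k : ℕ) : ZMod p) • w)) =
          (∑ k : Fin p, f ((k : ℕ) • i)) - (∑ _k : Fin p, f 0)
            - (∑ k : Fin p, ((k : ℕ) : ZMod p) • w) by
        rw [Finset.sum_sub_distrib, Finset.sum_sub_distrib]]
      have e1 : (∑ k : Fin p, f ((k : ℕ) • i)) = ∑ m : Fin p, f m :=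
        Fintype.sum_bijective _ hbij _ _ (fun k => rfl)
      have e2 : (∑ _k : Fin p, f 0) = (0 : Fin p → ZMod p) := by
        rw [Finset.sum_const, Finset.card_univ, Fintype.card_fin, hpsmul]
      have e3 : (∑ k : Fin p, ((k : ℕ) : ZMod p) • w) = 0 := by
        rw [← Finset.sum_smul, hsum0, zero_smul]
      rw [e1, e2, e3, sub_zero, sub_zero, hw]
    rwa [heq] at hsum
  -- `V₀ ≤ W`
  have h2 : V₀ ≤ W := by
    rw [hV, Submodule.span_le]
    rintro v ⟨l, hl, rfl⟩
    obtain ⟨k, hk⟩ := hbij.surjective l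
    have : f l - f 0 = (f ((k : ℕ) • i) - f 0 - ((k : ℕ) : ZMod p) • w)
        + ((k : ℕ) : ZMod p) • w := by
      simp only at hk
      rw [← hk]; abel
    rw [this]
    exact add_mem (htel _) (Submodule.smul_mem _ _ hwW)
  exact le_antisymm h1 h2
end

section
/- Let p be an odd prime and G = ⟨σ, τ : σ^{p²} = τ^p = 1, τ⁻¹στ = σ^{p+1}⟩ ≅ C_{p²} ⋊ C_p. Let M₁ = ⨁_{i=0}^{p−1} (ℤ/pℤ)·v_i with σ·v_i = v_{i+1} (indices mod p) and τ·v_i = −Σ_{l≠i} v_l. Then H¹(G/⟨σ^p⟩, M₁) ≅ ℤ/pℤ. -/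
/-!
Write `s`, `t` for the images of `σ`, `τ` in `Q = G ⧸ ⟨σ^p⟩`: they commute and generate `Q`,
`s` acts on `M₁` as the cyclic shift and `t` as `x ↦ x - (∑ x) • w`. A 1-cocycle `f` is
determined by `a = f s` and `b = f t`. The relation `f (s^p) = 0` forces `∑ a = 0`, and then
`f (st) = f (ts)` forces `b = c • w` to be constant. Since `∑ a = 0` we can write
`a = (s - 1) m`, and the coboundary of `m` takes the value `-(∑ m) • w` at `t`, where
`∑ m = ∑ i, i * a i` is read off `a`. So `f ↦ ∑ i, i * a i + c` vanishes exactly on the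
coboundaries. It is onto: `|G| = p³` forces `τ ∉ ⟨σ⟩`, so some character `χ : Q → ℤ/p` has
`χ s = 0` and `χ t = 1`, and `g ↦ χ g • w` is a cocycle on which the functional is `1`.
-/

open Finset groupCohomology

section CyclicIndices

variable {n : ℕ} {A : Type*} [AddCommGroup A]

theorem Fin.Iic_sub_one {j : Fin (n + 1)} (hj : j ≠ 0) : Iic (j - 1) = Iio j := by
  ext i
  have : j.val ≠ 0 := fun h => hj (Fin.ext h)
  simp only [mem_Iic, mem_Iio, Fin.le_def, Fin.lt_def, Fin.coe_sub_one, if_neg hj]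
  omega

theorem Fin.Iic_neg_one : Iic (-1 : Fin (n + 1)) = univ := by
  ext i
  simp only [mem_Iic, mem_univ, iff_true, Fin.le_def, Fin.coe_neg_one]
  omega

theorem Fin.succ_sub_one (i : Fin n) : i.succ - 1 = i.castSucc := by
  ext
  simp [Fin.coe_sub_one, Fin.succ_ne_zero]

theorem eq_apply_zero_of_apply_sub_one_eq {α : Type*} {b : Fin (n + 1) → α}
    (h : ∀ j, b (j - 1) = b j) (j : Fin (n + 1)) : b j = b 0 := by
  induction j using Fin.induction with
  | zero => rfl
  | succ i ih => rw [← h, Fin.succ_sub_one, ih]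

theorem exists_apply_sub_one_sub_eq (a : Fin (n + 1) → A) (ha : ∑ i, a i = 0) :
    ∃ m : Fin (n + 1) → A, ∀ j, m (j - 1) - m j = a j := by
  refine ⟨fun j => -∑ i ∈ Iic j, a i, fun j => ?_⟩
  dsimp only
  rcases eq_or_ne j 0 with rfl | hj
  · rw [zero_sub, Fin.Iic_neg_one, ha, ← bot_eq_zero (α := Fin (n + 1)), Iic_bot,
      sum_singleton]
    abel
  · rw [Fin.Iic_sub_one hj, ← Iio_insert, sum_insert notMem_Iio_self]
    abel

open Fin.NatCast in
theorem sum_range_apply_sub_natCast (x : Fin (n + 1) → A) (j : Fin (n + 1)) :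
    ∑ k ∈ range (n + 1), x (j - k) = ∑ i, x i := by
  rw [← Fin.sum_univ_eq_sum_range (fun k => x (j - k))]
  simp only [Fin.cast_val_eq_self]
  exact Fintype.sum_equiv (Equiv.subLeft j) _ _ fun _ => rfl

theorem sum_val_mul_apply_sub_one_sub (m : Fin (n + 1) → ZMod (n + 1)) :
    ∑ i : Fin (n + 1), (i.val : ZMod (n + 1)) * (m (i - 1) - m i) = ∑ i, m i := by
  have shift : ∑ i : Fin (n + 1), (i.val : ZMod (n + 1)) * m (i - 1)
      = ∑ i : Fin (n + 1), ((i.val : ZMod (n + 1)) + 1) * m i := by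
    refine (Fintype.sum_equiv (Equiv.addRight 1) _ _ fun i => ?_).symm
    simp [Fin.val_add, ZMod.natCast_mod]
  simp only [mul_sub, sum_sub_distrib, shift, add_mul, one_mul, sum_add_distrib,
    add_sub_cancel_left]

end CyclicIndices

section LinearMapsOnBasis

variable {n m : ℕ}

theorem linearMap_ext_single_one {B : Type*} [AddCommGroup B]
    {F F' : (Fin n → ZMod m) →ₗ[ℤ] B} (h : ∀ i, F (Pi.single i 1) = F' (Pi.single i 1)) :
    F = F' := by
  refine LinearMap.pi_ext fun i x => ?_
  rw [← ZMod.intCast_zmod_cast x, ← zsmul_one, Pi.single_smul', map_zsmul, map_zsmul, h]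

theorem apply_eq_apply_sub_one_of_map_single [NeZero n]
    {F : (Fin n → ZMod m) →ₗ[ℤ] (Fin n → ZMod m)}
    (hF : ∀ i, F (Pi.single i 1) = Pi.single (i + 1) 1) (x : Fin n → ZMod m) (j : Fin n) :
    F x j = x (j - 1) := by
  have : F = LinearMap.funLeft ℤ (ZMod m) (· - 1) := by
    refine linearMap_ext_single_one fun i => ?_
    ext j
    simp [hF, LinearMap.funLeft_apply, Pi.single_apply, sub_eq_iff_eq_add]
  rw [this, LinearMap.funLeft_apply]

theorem apply_eq_sub_sum_of_map_single {F : (Fin n → ZMod m) →ₗ[ℤ] (Fin n → ZMod m)}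
    (hF : ∀ i, F (Pi.single i 1) = -∑ l ∈ univ.erase i, Pi.single l (1 : ZMod m))
    (x : Fin n → ZMod m) (j : Fin n) :
    F x j = x j - ∑ l, x l := by
  have : F = LinearMap.id - LinearMap.pi fun _ => ∑ l, LinearMap.proj l := by
    refine linearMap_ext_single_one fun i => ?_
    rw [hF, sum_erase_eq_sub (mem_univ i), neg_sub]
    ext j
    simp [Finset.sum_apply, Pi.single_apply]
  rw [this]
  simp

end LinearMapsOnBasis

theorem Representation.apply_eq_self_of_closure_eq_top {k G V : Type*} [Semiring k] [Group G]
    [AddCommMonoid V] [Module k V] (ρ : Representation k G V) {S : Set G}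
    (hS : Subgroup.closure S = ⊤) {v : V} (hv : ∀ g ∈ S, ρ g v = v) (g : G) : ρ g v = v := by
  induction (hS ▸ Subgroup.mem_top g : g ∈ Subgroup.closure S) using Subgroup.closure_induction
    with
  | mem g hg => exact hv g hg
  | one => simp
  | mul g h _ _ hg hh => rw [map_mul, Module.End.mul_apply, hh, hg]
  | inv g _ hg => rw [ρ.inv_apply_eq_iff, hg]

universe u

namespace groupCohomology

variable {k G : Type u} [CommRing k] [Group G] {A : Rep k G}

theorem cocycles₁_map_pow (f : cocycles₁ A) (g : G) (m : ℕ) :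
    f (g ^ m) = ∑ i ∈ range m, A.ρ (g ^ i) (f g) := by
  induction m with
  | zero => simp
  | succ m ih =>
    rw [pow_succ', (mem_cocycles₁_iff f).1 f.2, ih, map_sum, sum_range_succ']
    simp [pow_succ', Module.End.mul_apply]

theorem cocycles₁_ext_of_closure_eq_top {S : Set G} (hS : Subgroup.closure S = ⊤)
    {f₁ f₂ : cocycles₁ A} (h : ∀ g ∈ S, f₁ g = f₂ g) : f₁ = f₂ := by
  refine cocycles₁_ext fun g => ?_
  induction (hS ▸ Subgroup.mem_top g : g ∈ Subgroup.closure S) using Subgroup.closure_induction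
    with
  | mem g hg => exact h g hg
  | one => simp
  | mul g h _ _ hg hh =>
    rw [(mem_cocycles₁_iff f₁).1 f₁.2, (mem_cocycles₁_iff f₂).1 f₂.2, hg, hh]
  | inv g _ hg =>
    refine (A.ρ.apply_bijective g).1 ?_
    rw [cocycles₁_map_inv, cocycles₁_map_inv, hg]

theorem nonempty_H1_linearEquiv {M : Type*} [AddCommGroup M] [Module k M]
    (Φ : cocycles₁ A →ₗ[k] M) (hΦ : Function.Surjective Φ)
    (hker : ∀ f, Φ f = 0 ↔ ⇑f ∈ coboundaries₁ A) : Nonempty (H1 A ≃ₗ[k] M) := by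
  have hπ : Function.Surjective (H1π A).hom := (ModuleCat.epi_iff_surjective _).1 inferInstance
  have hkerπ : LinearMap.ker (H1π A).hom = LinearMap.ker Φ := by
    ext f
    rw [LinearMap.mem_ker, LinearMap.mem_ker, hker]
    exact H1π_eq_zero_iff f
  exact ⟨((H1π A).hom.quotKerEquivOfSurjective hπ).symm ≪≫ₗ
    Submodule.quotEquivOfEq _ _ hkerπ ≪≫ₗ Φ.quotKerEquivOfSurjective hΦ⟩

end groupCohomology

section CyclicShiftRepresentation

open Fin.NatCast

variable {Q : Type} {n : ℕ} {s t : Q}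

def h1Functional (s t : Q) : (Q → Fin (n + 1) → ZMod (n + 1)) →ₗ[ℤ] ZMod (n + 1) where
  toFun f := ∑ i, (i.val : ZMod (n + 1)) * f s i + f t 0
  map_add' f g := by
    simp only [Pi.add_apply, mul_add, sum_add_distrib]
    ring
  map_smul' z f := by
    simp only [Pi.smul_apply, zsmul_eq_mul, mul_left_comm _ (z : ZMod (n + 1)), ← mul_sum,
      RingHom.id_apply, mul_add]

theorem h1Functional_apply (f : Q → Fin (n + 1) → ZMod (n + 1)) :
    h1Functional s t f = ∑ i, (i.val : ZMod (n + 1)) * f s i + f t 0 := rfl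

variable [Group Q] {ρ : Representation ℤ Q (Fin (n + 1) → ZMod (n + 1))}

theorem apply_pow_eq_apply_sub (hs : ∀ x j, ρ s x j = x (j - 1)) (i : ℕ)
    (x : Fin (n + 1) → ZMod (n + 1)) (j : Fin (n + 1)) :
    ρ (s ^ i) x j = x (j - i) := by
  induction i generalizing j with
  | zero => simp
  | succ i ih =>
    rw [pow_succ', map_mul, Module.End.mul_apply, hs, ih, Nat.cast_succ, sub_add_eq_sub_sub_swap]

theorem h1Functional_d₀₁ (hs : ∀ x j, ρ s x j = x (j - 1))
    (ht : ∀ x j, ρ t x j = x j - ∑ l, x l) (m : Fin (n + 1) → ZMod (n + 1)) :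
    h1Functional s t ((d₀₁ (Rep.of ρ)).hom m) = 0 := by
  change ∑ i, (i.val : ZMod (n + 1)) * (ρ s m i - m i) + (ρ t m 0 - m 0) = 0
  simp only [hs, ht, sum_val_mul_apply_sub_one_sub]
  ring

theorem sum_cocycles₁_apply_eq_zero (hs : ∀ x j, ρ s x j = x (j - 1)) (hsn : s ^ (n + 1) = 1)
    (f : cocycles₁ (Rep.of ρ)) : ∑ i, f s i = 0 := by
  have hnorm := congrFun (cocycles₁_map_pow f s (n + 1)) 0
  simp only [hsn, cocycles₁_map_one, Finset.sum_apply, apply_pow_eq_apply_sub hs,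
    sum_range_apply_sub_natCast] at hnorm
  exact hnorm.symm

theorem cocycles₁_apply_eq_apply_zero (hs : ∀ x j, ρ s x j = x (j - 1))
    (ht : ∀ x j, ρ t x j = x j - ∑ l, x l) (hsn : s ^ (n + 1) = 1) (hst : Commute s t)
    (f : cocycles₁ (Rep.of ρ)) (j : Fin (n + 1)) : f t j = f t 0 := by
  refine eq_apply_zero_of_apply_sub_one_eq (fun j => ?_) j
  have h := congrFun ((mem_cocycles₁_iff f).1 f.2 s t) j
  rw [hst.eq, (mem_cocycles₁_iff f).1 f.2 t s] at h
  simp only [Pi.add_apply, hs, ht, sum_cocycles₁_apply_eq_zero hs hsn f] at h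
  linear_combination h.symm

theorem mem_coboundaries₁_of_h1Functional_eq_zero (hs : ∀ x j, ρ s x j = x (j - 1))
    (ht : ∀ x j, ρ t x j = x j - ∑ l, x l) (hsn : s ^ (n + 1) = 1) (hst : Commute s t)
    (hgen : Subgroup.closure {s, t} = ⊤) (f : cocycles₁ (Rep.of ρ))
    (hf : h1Functional s t f = 0) : ⇑f ∈ coboundaries₁ (Rep.of ρ) := by
  obtain ⟨m, hm⟩ := exists_apply_sub_one_sub_eq (f s) (sum_cocycles₁_apply_eq_zero hs hsn f)
  have hft : f t 0 = -∑ i, m i := by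
    rw [h1Functional_apply] at hf
    rw [← sum_val_mul_apply_sub_one_sub m]
    simp only [hm]
    linear_combination hf
  have hfm : (⟨_, d₀₁_apply_mem_cocycles₁ m⟩ : cocycles₁ (Rep.of ρ)) = f := by
    refine cocycles₁_ext_of_closure_eq_top hgen ?_
    simp only [Set.mem_insert_iff, Set.mem_singleton_iff, forall_eq_or_imp, forall_eq]
    constructor <;> funext j
    · change ρ s m j - m j = f s j
      rw [hs, hm]
    · change ρ t m j - m j = f t j
      rw [ht, cocycles₁_apply_eq_apply_zero hs ht hsn hst f j, hft]
      ring
  exact ⟨m, congrArg Subtype.val hfm⟩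

theorem h1Functional_surjective (hs : ∀ x j, ρ s x j = x (j - 1))
    (ht : ∀ x j, ρ t x j = x j - ∑ l, x l) (hgen : Subgroup.closure {s, t} = ⊤)
    (χ : Q →* Multiplicative (ZMod (n + 1))) (hχs : χ s = 1) (hχt : χ t = .ofAdd 1) :
    Function.Surjective ((h1Functional s t).comp (cocycles₁ (Rep.of ρ)).subtype) := by
  have hconst (c : ZMod (n + 1)) (g : Q) : ρ g (fun _ => c) = fun _ => c := by
    refine ρ.apply_eq_self_of_closure_eq_top hgen ?_ g
    rintro g (rfl | rfl) <;> funext j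
    · simp [hs]
    · simp [ht]
  let f₀ : cocycles₁ (Rep.of ρ) := ⟨fun g _ => (χ g).toAdd, by
    rw [mem_cocycles₁_iff]
    intro g h
    simp only [hconst, map_mul, toAdd_mul]
    funext j
    simp [add_comm]⟩
  have hf₀ : h1Functional s t f₀ = 1 := by
    change ∑ i : Fin (n + 1), (i.val : ZMod (n + 1)) * (χ s).toAdd + (χ t).toAdd = 1
    simp [hχs, hχt]
  intro c
  refine ⟨(c.cast : ℤ) • f₀, ?_⟩
  simp [hf₀]

end CyclicShiftRepresentation

theorem exists_monoidHom_zmod_of_notMem_zpowers {Q : Type*} [Group Q] {p : ℕ} (hp : p.Prime)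
    {s t : Q} (hst : Commute s t) (hgen : Subgroup.closure {s, t} = ⊤) (htp : t ^ p = 1)
    (hts : t ∉ Subgroup.zpowers s) :
    ∃ χ : Q →* Multiplicative (ZMod p), χ s = 1 ∧ χ t = .ofAdd 1 := by
  have : Fact p.Prime := ⟨hp⟩
  have hcentral (g : Q) : Commute g s := by
    have : ⊤ ≤ Subgroup.centralizer {s} := by
      rw [← hgen, Subgroup.closure_le]
      rintro g (rfl | rfl) <;> rw [SetLike.mem_coe, Subgroup.mem_centralizer_singleton_iff]
      exact hst.symm.eq
    exact Subgroup.mem_centralizer_singleton_iff.1 (this (Subgroup.mem_top g))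
  have : (Subgroup.zpowers s).Normal := ⟨by
    rintro _ ⟨k, rfl⟩ g
    rw [((hcentral g).zpow_right k).eq, mul_inv_cancel_right]
    exact ⟨k, rfl⟩⟩
  let π := QuotientGroup.mk' (Subgroup.zpowers s)
  have hπs : π s = 1 := (QuotientGroup.eq_one_iff s).2 (Subgroup.mem_zpowers s)
  have hgenq (x : Q ⧸ Subgroup.zpowers s) : x ∈ Subgroup.zpowers (π t) := by
    rw [Subgroup.zpowers_eq_closure (π t), ← Subgroup.closure_insert_one, ← hπs,
      ← Set.image_pair, ← MonoidHom.map_closure, hgen,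
      Subgroup.map_top_of_surjective _ (QuotientGroup.mk'_surjective _)]
    exact Subgroup.mem_top x
  have hord : orderOf (π t) = p := orderOf_eq_prime (by rw [← map_pow, htp, map_one])
    (by rwa [Ne, QuotientGroup.mk'_apply, QuotientGroup.eq_one_iff])
  have hcard : Nat.card (Q ⧸ Subgroup.zpowers s) = p :=
    hord ▸ (orderOf_eq_card_of_forall_mem_zpowers hgenq).symm
  refine ⟨(zmodMulEquivOfGenerator hgenq hcard).symm.toMonoidHom.comp π, ?_, ?_⟩
  · simp [hπs]
  · simp

section Presentation

variable {G : Type*} [Group G] {σ τ : G} {p : ℕ}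

theorem commute_mk_of_inv_mul_mul_eq_pow_succ [(Subgroup.zpowers (σ ^ p)).Normal]
    (h : τ⁻¹ * σ * τ = σ ^ (p + 1)) :
    Commute (σ : G ⧸ Subgroup.zpowers (σ ^ p)) τ := by
  have hconj : ((τ⁻¹ * σ * τ : G) : G ⧸ Subgroup.zpowers (σ ^ p)) = σ := by
    rw [h, pow_succ, QuotientGroup.mk_mul,
      (QuotientGroup.eq_one_iff _).2 (Subgroup.mem_zpowers _), one_mul]
  rw [QuotientGroup.mk_mul, QuotientGroup.mk_mul, QuotientGroup.mk_inv, mul_assoc,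
    inv_mul_eq_iff_eq_mul] at hconj
  exact hconj

theorem mk_notMem_zpowers_mk [(Subgroup.zpowers (σ ^ p)).Normal] (hp : 1 < p)
    (hσ : σ ^ (p ^ 2) = 1) (hgen : Subgroup.closure {σ, τ} = ⊤) (hcard : Nat.card G = p ^ 3) :
    (τ : G ⧸ Subgroup.zpowers (σ ^ p)) ∉
      Subgroup.zpowers (σ : G ⧸ Subgroup.zpowers (σ ^ p)) := by
  rw [Subgroup.mem_zpowers_iff]
  rintro ⟨k, hk⟩
  rw [← QuotientGroup.mk_zpow, QuotientGroup.eq] at hk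
  have hτ : τ ∈ Subgroup.zpowers σ := by
    have hle : Subgroup.zpowers (σ ^ p) ≤ Subgroup.zpowers σ :=
      Subgroup.zpowers_le.2 (Subgroup.pow_mem _ (Subgroup.mem_zpowers σ) p)
    simpa using mul_mem (Subgroup.zpow_mem _ (Subgroup.mem_zpowers σ) k) (hle hk)
  have htop : Subgroup.zpowers σ = ⊤ := by
    rw [eq_top_iff, ← hgen, Subgroup.closure_le]
    rintro g (rfl | rfl)
    · exact Subgroup.mem_zpowers g
    · exact hτ
  have hdvd : p ^ 3 ∣ p ^ 2 := by
    rw [← hcard, ← Subgroup.card_top, ← htop, Nat.card_zpowers]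
    exact orderOf_dvd_of_pow_eq_one hσ
  exact absurd ((Nat.pow_dvd_pow_iff_le_right hp).1 hdvd) (by norm_num)

end Presentation

theorem h1_quotient_rep_iso_zmod_p_general
    (p : ℕ) [NeZero p] (hp : p.Prime)
    {G : Type} [Group G] (σ τ : G)
    (h1 : σ ^ (p ^ 2) = 1) (h2 : τ ^ p = 1) (h3 : τ⁻¹ * σ * τ = σ ^ (p + 1))
    (hgen : Subgroup.closure {σ, τ} = ⊤) (hcard : Nat.card G = p ^ 3)
    [hN : (Subgroup.zpowers (σ ^ p)).Normal]
    (ρ : Representation ℤ (G ⧸ Subgroup.zpowers (σ ^ p)) (Fin p → ZMod p))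
    (hρσ : ∀ i : Fin p, ρ (QuotientGroup.mk σ) (Pi.single i 1) = Pi.single (i + 1) 1)
    (hρτ : ∀ i : Fin p, ρ (QuotientGroup.mk τ) (Pi.single i 1) =
      - ∑ l ∈ Finset.univ.erase i, Pi.single l (1 : ZMod p)) :
    Nonempty (groupCohomology.H1 (Rep.of ρ) ≃ₗ[ℤ] ZMod p) := by
  obtain ⟨n, rfl⟩ := Nat.exists_eq_add_one_of_ne_zero hp.ne_zero
  have hs := apply_eq_apply_sub_one_of_map_single hρσ
  have ht := apply_eq_sub_sum_of_map_single hρτ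
  have hsn : (σ : G ⧸ Subgroup.zpowers (σ ^ (n + 1))) ^ (n + 1) = 1 := by
    rw [← QuotientGroup.mk_pow, QuotientGroup.eq_one_iff]
    exact Subgroup.mem_zpowers _
  have htn : (τ : G ⧸ Subgroup.zpowers (σ ^ (n + 1))) ^ (n + 1) = 1 := by
    rw [← QuotientGroup.mk_pow, h2, QuotientGroup.mk_one]
  have hst := commute_mk_of_inv_mul_mul_eq_pow_succ h3
  have hgenQ : Subgroup.closure
      {(σ : G ⧸ Subgroup.zpowers (σ ^ (n + 1))), (τ : G ⧸ Subgroup.zpowers (σ ^ (n + 1)))} =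
        ⊤ := by
    rw [← Set.image_pair, ← QuotientGroup.coe_mk', ← MonoidHom.map_closure, hgen,
      Subgroup.map_top_of_surjective _ (QuotientGroup.mk'_surjective _)]
  obtain ⟨χ, hχs, hχt⟩ := exists_monoidHom_zmod_of_notMem_zpowers hp hst hgenQ htn
    (mk_notMem_zpowers_mk hp.one_lt h1 hgen hcard)
  refine nonempty_H1_linearEquiv _ (h1Functional_surjective hs ht hgenQ χ hχs hχt) fun f =>
    ⟨mem_coboundaries₁_of_h1Functional_eq_zero hs ht hsn hst hgenQ f, ?_⟩
  rintro ⟨m, hm⟩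
  exact (congrArg (h1Functional _ _) hm).symm.trans (h1Functional_d₀₁ hs ht m)

/-- Let `p` be an odd prime and `G = ⟨σ, τ : σ^(p²) = τ^p = 1, τ⁻¹στ = σ^(p+1)⟩ ≅ C_{p²} ⋊ C_p`.
Let `M₁ = ⨁_{i ∈ Fin p} (ℤ/p)·vᵢ` with (the image of) `σ` acting by `vᵢ ↦ v_{i+1}`
(indices mod `p`) and (the image of) `τ` acting by `vᵢ ↦ -∑_{l ≠ i} v_l`, as a representation
of the quotient `G/⟨σ^p⟩`.  Then `H¹(G/⟨σ^p⟩, M₁) ≅ ℤ/pℤ`. -/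
theorem h1_quotient_rep_iso_zmod_p
    (p : ℕ) [NeZero p] (hp : p.Prime) (hodd : Odd p)
    {G : Type} [Group G] (σ τ : G)
    (h1 : σ ^ (p ^ 2) = 1) (h2 : τ ^ p = 1) (h3 : τ⁻¹ * σ * τ = σ ^ (p + 1))
    (hgen : Subgroup.closure {σ, τ} = ⊤) (hcard : Nat.card G = p ^ 3)
    [hN : (Subgroup.zpowers (σ ^ p)).Normal]
    (ρ : Representation ℤ (G ⧸ Subgroup.zpowers (σ ^ p)) (Fin p → ZMod p))
    (hρσ : ∀ i : Fin p, ρ (QuotientGroup.mk σ) (Pi.single i 1) = Pi.single (i + 1) 1)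
    (hρτ : ∀ i : Fin p, ρ (QuotientGroup.mk τ) (Pi.single i 1) =
      - ∑ l ∈ Finset.univ.erase i, Pi.single l (1 : ZMod p)) :
    Nonempty (groupCohomology.H1 (Rep.of ρ) ≃ₗ[ℤ] ZMod p) :=
  h1_quotient_rep_iso_zmod_p_general p hp σ τ h1 h2 h3 hgen hcard (hN := hN) ρ hρσ hρτ
end

section
/- Let G = ⟨σ, τ⟩ ≅ D_{4n} act on M = (⨁_{i=1}^{2n} ℤ·x_i) ⊕ ℤ·y₁ ⊕ ℤ·y₂ by σ : x₁ ↦ x₂ ↦ ⋯ ↦ x_{2n} ↦ −x₁, y₁ ↦ y₂ + x₁, y₂ ↦ y₁ + x₁, and τ : x_i ↦ −x_{2n+1−i}, y₁ ↦ −y₂, y₂ ↦ −y₁. Then M^{⟨σ⟩} = ℤ·w where w = y₁ + y₂ + Σ_{i=1}^{2n} x_i, and τ·w = −w. -/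
/-!
In the coordinates `c = b.repr m`, `σ` shifts the `x`-block (`c' x_{j+1} = c x_j`), swaps the two
`y`-coordinates, and has new first coordinate `c' x₁ = -c x_{2n} + c y₁ + c y₂`. Hence a
`σ`-fixed vector has all `x`-coordinates equal to some `c₀` and both `y`-coordinates equal to
some `d`, with `c₀ = -c₀ + 2d`; since `ℤ` has no `2`-torsion, `c₀ = d`, so the vector is
`c₀ • w` with `w = ∑ i, b i`. Finally `τ` sends each basis vector to minus another one,
permuting the basis, so `τ w = -w`.
-/

open Module

theorem Module.Basis.exists_eq_smul_sum_iff {ι R M : Type*} [Fintype ι] [Semiring R]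
    [AddCommMonoid M] [Module R M] (b : Basis ι R M) (i₀ : ι) (m : M) :
    (∃ a : R, m = a • ∑ i, b i) ↔ ∀ i, b.repr m i = b.repr m i₀ := by
  constructor
  · rintro ⟨a, rfl⟩ i
    simp [Finset.smul_sum]
  · intro h
    refine ⟨b.repr m i₀, b.ext_elem fun i => ?_⟩
    simp [Finset.smul_sum, h i]

theorem map_sum_eq_neg_sum_of_perm {ι M F : Type*} [Fintype ι] [AddCommGroup M]
    [FunLike F M M] [AddMonoidHomClass F M M] (f : F) (v : ι → M) (π : ι ≃ ι)
    (hf : ∀ i, f (v i) = -v (π i)) : f (∑ i, v i) = -∑ i, v i := by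
  rw [map_sum, Finset.sum_congr rfl fun i _ => hf i, Finset.sum_neg_distrib,
    Equiv.sum_comp π v]

namespace DihedralLattice

variable {R M : Type*} [Ring R] [AddCommGroup M] [Module R M] {n : ℕ}

-- 0-based: `x j` is the paper's `x_{j+1}`.
abbrev x (j : Fin (2 * n)) : Fin (2 * n + 2) := Fin.castAdd 2 j

abbrev y₁ : Fin (2 * n + 2) := Fin.natAdd (2 * n) 0

abbrev y₂ : Fin (2 * n + 2) := Fin.natAdd (2 * n) 1

theorem forall_index_iff {P : Fin (2 * n + 2) → Prop} :
    (∀ i, P i) ↔ (∀ j, P (x j)) ∧ P y₁ ∧ P y₂ := by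
  rw [Fin.forall_fin_add, Fin.forall_fin_two]

structure IsSigmaMap (hn : 0 < n) (b : Basis (Fin (2 * n + 2)) R M) (f : M →ₗ[R] M) : Prop where
  map_x (j : Fin (2 * n)) :
    f (b (x j)) = if h : (j : ℕ) + 1 < 2 * n then b (x ⟨j + 1, h⟩) else -b (x ⟨0, j.pos⟩)
  map_y₁ : f (b y₁) = b y₂ + b (x ⟨0, by omega⟩)
  map_y₂ : f (b y₂) = b y₁ + b (x ⟨0, by omega⟩)

namespace IsSigmaMap

variable {hn : 0 < n} {b : Basis (Fin (2 * n + 2)) R M} {f : M →ₗ[R] M} (hσ : IsSigmaMap hn b f)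
  (m : M)
include hσ

theorem repr_x_succ (j : Fin (2 * n)) (h : (j : ℕ) + 1 < 2 * n) :
    b.repr (f m) (x ⟨j + 1, h⟩) = b.repr m (x j) :=
  LinearMap.congr_fun (f := b.coord _ ∘ₗ f) (g := b.coord _) (b.ext <| forall_index_iff.2 <| by
    simp [hσ.map_x, hσ.map_y₁, hσ.map_y₂, apply_dite, Finsupp.single_apply, Fin.ext_iff]
    grind) m

theorem repr_y₁ : b.repr (f m) y₁ = b.repr m y₂ :=
  LinearMap.congr_fun (f := b.coord _ ∘ₗ f) (g := b.coord _) (b.ext <| forall_index_iff.2 <| by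
    simp [hσ.map_x, hσ.map_y₁, hσ.map_y₂, apply_dite, Finsupp.single_apply, Fin.ext_iff]
    grind) m

theorem repr_y₂ : b.repr (f m) y₂ = b.repr m y₁ :=
  LinearMap.congr_fun (f := b.coord _ ∘ₗ f) (g := b.coord _) (b.ext <| forall_index_iff.2 <| by
    simp [hσ.map_x, hσ.map_y₁, hσ.map_y₂, apply_dite, Finsupp.single_apply, Fin.ext_iff]
    grind) m

theorem repr_x_zero :
    b.repr (f m) (x ⟨0, by omega⟩) =
      -b.repr m (x ⟨2 * n - 1, by omega⟩) + b.repr m y₁ + b.repr m y₂ :=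
  LinearMap.congr_fun (f := b.coord _ ∘ₗ f)
    (g := -b.coord (x ⟨2 * n - 1, by omega⟩) + b.coord y₁ + b.coord y₂)
    (b.ext <| forall_index_iff.2 <| by
      simp [hσ.map_x, hσ.map_y₁, hσ.map_y₂, apply_dite, Finsupp.single_apply, Fin.ext_iff]
      grind) m

theorem map_eq_self_iff_repr_const [IsAddTorsionFree R] :
    f m = m ↔ ∀ i, b.repr m i = b.repr m (x ⟨0, by omega⟩) := by
  constructor
  · intro hfix
    have succ := hσ.repr_x_succ m
    have y₂_eq := hσ.repr_y₂ m
    have zero := hσ.repr_x_zero m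
    rw [hfix] at succ y₂_eq zero
    have x_const (j : Fin (2 * n)) : b.repr m (x j) = b.repr m (x ⟨0, by omega⟩) := by
      obtain ⟨j, hj⟩ := j
      induction j with
      | zero => rfl
      | succ j ih => rw [succ ⟨j, by omega⟩ hj, ih]
    have y₁_eq : b.repr m y₁ = b.repr m (x ⟨0, by omega⟩) := by
      rw [x_const ⟨2 * n - 1, by omega⟩, y₂_eq, add_assoc, eq_neg_add_iff_add_eq] at zero
      exact nsmul_right_injective two_ne_zero (by simp only [two_nsmul, zero])
    exact forall_index_iff.2 ⟨x_const, y₁_eq, y₂_eq.trans y₁_eq⟩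
  · intro hconst
    refine b.ext_elem <| forall_index_iff.2 ⟨fun j => ?_, ?_, ?_⟩
    · obtain ⟨_ | j, hj⟩ := j
      · rw [hσ.repr_x_zero, hconst, hconst y₁, hconst y₂]
        abel
      · rw [hσ.repr_x_succ m ⟨j, by omega⟩ hj]
        exact (hconst _).trans (hconst _).symm
    · rw [hσ.repr_y₁]
      exact (hconst _).trans (hconst _).symm
    · rw [hσ.repr_y₂]
      exact (hconst _).trans (hconst _).symm

end IsSigmaMap

end DihedralLattice

open DihedralLattice in
/-- Let `G = ⟨σ, τ⟩ ≅ D_{4n}` (order `8n`) act on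
`M = (⨁_{i=1}^{2n} ℤ·xᵢ) ⊕ ℤ·y₁ ⊕ ℤ·y₂` (basis `b 0, …, b (2n+1)`, where
`xᵢ = b (i-1)`, `y₁ = b (2n)`, `y₂ = b (2n+1)`) by
`σ : x₁ ↦ ⋯ ↦ x_{2n} ↦ -x₁, y₁ ↦ y₂ + x₁, y₂ ↦ y₁ + x₁` and
`τ : xᵢ ↦ -x_{2n+1-i}, y₁ ↦ -y₂, y₂ ↦ -y₁`.  Then the `σ`-fixed sublattice of `M` is
`ℤ·w` with `w = y₁ + y₂ + ∑ᵢ xᵢ`, and `τ·w = -w`. -/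
theorem dihedral_big_lattice_sigma_invariants
    (n : ℕ) (hn : 0 < n) {G : Type} [Group G] (σ τ : G)
    {M : Type} [AddCommGroup M] [Module ℤ M] (b : Module.Basis (Fin (2 * n + 2)) ℤ M)
    (ρ : Representation ℤ G M)
    (hρσ : ∀ i : Fin (2 * n + 2), ρ σ (b i) =
      if h : (i : ℕ) + 1 < 2 * n then b ⟨(i : ℕ) + 1, by omega⟩
      else if (i : ℕ) = 2 * n - 1 then - b ⟨0, by omega⟩
      else if (i : ℕ) = 2 * n then b ⟨2 * n + 1, by omega⟩ + b ⟨0, by omega⟩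
      else b ⟨2 * n, by omega⟩ + b ⟨0, by omega⟩)
    (hρτ : ∀ i : Fin (2 * n + 2), ρ τ (b i) =
      if (i : ℕ) < 2 * n then - b ⟨2 * n - 1 - (i : ℕ), by omega⟩
      else if (i : ℕ) = 2 * n then - b ⟨2 * n + 1, by omega⟩
      else - b ⟨2 * n, by omega⟩) :
    (∀ m : M, ρ σ m = m ↔ ∃ a : ℤ, m = a •
      (b ⟨2 * n, by omega⟩ + b ⟨2 * n + 1, by omega⟩ +
        ∑ i : Fin (2 * n), b (Fin.castLE (by omega) i))) ∧
    ρ τ (b ⟨2 * n, by omega⟩ + b ⟨2 * n + 1, by omega⟩ +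
        ∑ i : Fin (2 * n), b (Fin.castLE (by omega) i)) =
      - (b ⟨2 * n, by omega⟩ + b ⟨2 * n + 1, by omega⟩ +
        ∑ i : Fin (2 * n), b (Fin.castLE (by omega) i)) := by
  have hσ : IsSigmaMap hn b (ρ σ) := by
    refine ⟨fun j => ?_, ?_, ?_⟩ <;> rw [hρσ] <;>
      simp only [Fin.val_castAdd, Fin.val_natAdd, Fin.val_zero, Fin.val_one] <;>
      split_ifs <;> first | rfl | omega
  have hτx : ∀ j : Fin (2 * n), ρ τ (b (Fin.castLE (by omega) j)) =
      -b (Fin.castLE (by omega) (Fin.revPerm j)) := by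
    intro j
    rw [hρτ, if_pos (by simp)]
    congr 2
    ext
    simp only [Fin.val_castLE, Fin.revPerm_apply, Fin.val_rev]
    omega
  constructor
  · have hw : b ⟨2 * n, by omega⟩ + b ⟨2 * n + 1, by omega⟩ +
        ∑ i : Fin (2 * n), b (Fin.castLE (by omega) i) = ∑ i, b i := by
      rw [Fin.sum_univ_add, Fin.sum_univ_two, add_comm]
      rfl
    -- the statement's `a •` is the `zsmul` of `AddCommGroup M`, not the given `Module ℤ M`
    refine fun m => (hσ.map_eq_self_iff_repr_const m).trans <| hw ▸
      (b.exists_eq_smul_sum_iff _ m).symm.trans <| exists_congr fun a =>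
        Iff.of_eq (congrArg (m = ·) (int_smul_eq_zsmul ‹_› a _))
  · rw [map_add, map_add, hρτ, hρτ, if_neg (lt_irrefl _), if_pos rfl, if_neg (by simp),
      if_neg (by simp), map_sum_eq_neg_sum_of_perm (ρ τ) _ _ hτx]
    abel
end
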